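/- Let q ≥ 7 be a prime power, m ≥ 2, and let P be a point of 𝔽_q² and f : 𝔽_q² → 𝔽_q with deg(f) = b where 6 ≤ b < (q+4)/3, |f| ≤ (q−b+2)(q−2), and f(P) = 0. Then there is an affine line L through P that does not meet the support of f. -/

import Mathlib

/-- The Hamming weight of a function: the number of points where it is nonzero. -/
noncomputable def hamWt {α F : Type*} [Zero F] (f : α → F) : ℕ := {x | f x ≠ 0}.ncard

/-!
Suppose every line through `P` meets the support of `f`. Restricted to such a line, `f` is a
nonzero univariate polynomial of degree at most `b`, so the line carries at least `q - b` points
of the support, none of them `P`. The `q + 1` lines through `P` are disjoint away from `P`, hence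
`|f| ≥ (q + 1)(q - b)`, which exceeds `(q - b + 2)(q - 2)` as soon as `3b < q + 4`.
-/

open Polynomial Finset

noncomputable def lineRestriction {R σ : Type*} [CommRing R] (p : MvPolynomial σ R)
    (x v : σ → R) : R[X] :=
  MvPolynomial.aeval (fun i => C (x i) + C (v i) * X) p

section LineRestriction

variable {R σ : Type*} [CommRing R]

theorem natDegree_aeval_le_totalDegree (p : MvPolynomial σ R) (g : σ → R[X])
    (hg : ∀ i, (g i).natDegree ≤ 1) :
    (MvPolynomial.aeval g p).natDegree ≤ p.totalDegree := by
  rw [MvPolynomial.aeval_eq_eval₂Hom, MvPolynomial.coe_eval₂Hom, MvPolynomial.eval₂_eq]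
  refine natDegree_sum_le_of_forall_le _ _ fun d hd => ?_
  calc (algebraMap R R[X] (p.coeff d) * ∏ i ∈ d.support, g i ^ d i).natDegree
      ≤ ∑ i ∈ d.support, (g i ^ d i).natDegree :=
        (natDegree_C_mul_le _ _).trans (natDegree_prod_le _ _)
    _ ≤ ∑ i ∈ d.support, d i :=
        sum_le_sum fun i _ => (natDegree_pow_le_of_le _ (hg i)).trans (by simp)
    _ ≤ p.totalDegree := MvPolynomial.le_totalDegree hd

theorem natDegree_lineRestriction_le (p : MvPolynomial σ R) (x v : σ → R) :
    (lineRestriction p x v).natDegree ≤ p.totalDegree :=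
  natDegree_aeval_le_totalDegree p _ fun i => by compute_degree

theorem eval_lineRestriction (p : MvPolynomial σ R) (x v : σ → R) (t : R) :
    (lineRestriction p x v).eval t = MvPolynomial.eval (x + t • v) p := by
  have hline : (fun i => aeval t (C (x i) + C (v i) * X)) = x + t • v := by
    funext i
    simp only [map_add, map_mul, aeval_C, aeval_X, Algebra.algebraMap_self, RingHom.id_apply,
      Pi.add_apply, Pi.smul_apply, smul_eq_mul, mul_comm]
  rw [lineRestriction, ← coe_aeval_eq_eval, MvPolynomial.comp_aeval_apply, hline]
  rfl

theorem card_sub_totalDegree_le_card_filter_ne_zero {F : Type*} [Field F] [Fintype F]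
    [DecidableEq F] (p : MvPolynomial σ F) (x v : σ → F)
    (h : ∃ t : F, MvPolynomial.eval (x + t • v) p ≠ 0) :
    Fintype.card F - p.totalDegree ≤ #{t : F | MvPolynomial.eval (x + t • v) p ≠ 0} := by
  have hne : lineRestriction p x v ≠ 0 := by
    intro h0
    obtain ⟨t, ht⟩ := h
    rw [← eval_lineRestriction, h0, eval_zero] at ht
    exact ht rfl
  have hzeros : #{t | MvPolynomial.eval (x + t • v) p = 0} ≤ p.totalDegree :=
    calc #{t | MvPolynomial.eval (x + t • v) p = 0}
        ≤ (lineRestriction p x v).roots.toFinset.card := card_le_card fun t ht => by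
          rw [mem_filter, ← eval_lineRestriction] at ht
          rw [Multiset.mem_toFinset, mem_roots hne]
          exact ht.2
      _ ≤ (lineRestriction p x v).natDegree :=
          (Multiset.toFinset_card_le _).trans (card_roots' _)
      _ ≤ p.totalDegree := natDegree_lineRestriction_le p x v
  have hsplit := card_filter_add_card_filter_not
    (s := univ) (fun t : F => MvPolynomial.eval (x + t • v) p = 0)
  simp only [card_univ, ← ne_eq] at hsplit
  omega

end LineRestriction

section PlaneLines

variable {F : Type*} [Field F]

/-- The directions of the `q + 1` lines through a point of `F²`, one per point of `ℙ¹(F)`. -/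
def lineDir : Option F → Fin 2 → F
  | none => ![0, 1]
  | some a => ![1, a]

theorem lineDir_ne_zero (o : Option F) : lineDir o ≠ 0 := by
  cases o with
  | none => exact fun h => one_ne_zero (congrFun h 1)
  | some a => exact fun h => one_ne_zero (congrFun h 0)

theorem eq_of_smul_lineDir_eq {t₁ t₂ : F} {o₁ o₂ : Option F} (ht₁ : t₁ ≠ 0)
    (h : t₁ • lineDir o₁ = t₂ • lineDir o₂) : o₁ = o₂ := by
  have h0 := congrFun h 0
  have h1 := congrFun h 1
  cases o₁ with
  | none =>
    cases o₂ with
    | none => rfl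
    | some a =>
      simp only [lineDir, Pi.smul_apply, smul_eq_mul, Matrix.cons_val_zero, Matrix.cons_val_one,
        mul_zero, mul_one] at h0 h1
      exact absurd (h1.trans (by rw [← h0, zero_mul])) ht₁
  | some a =>
    cases o₂ with
    | none =>
      simp only [lineDir, Pi.smul_apply, smul_eq_mul, Matrix.cons_val_zero, mul_zero,
        mul_one] at h0
      exact absurd h0 ht₁
    | some c =>
      simp only [lineDir, Pi.smul_apply, smul_eq_mul, Matrix.cons_val_zero, Matrix.cons_val_one,
        mul_one] at h0 h1
      rw [← h0] at h1
      rw [mul_left_cancel₀ ht₁ h1]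

theorem hamWt_eq_card_filter {α M : Type*} [Fintype α] [Zero M] [DecidableEq M] (f : α → M) :
    hamWt f = #{x | f x ≠ 0} := by
  simp [hamWt, Set.ncard_eq_toFinset_card']

theorem card_succ_mul_le_hamWt [Fintype F] [DecidableEq F] (f : (Fin 2 → F) → F)
    (x : Fin 2 → F) (hx : f x = 0) (k : ℕ)
    (hk : ∀ o, k ≤ #{t : F | f (x + t • lineDir o) ≠ 0}) :
    (Fintype.card F + 1) * k ≤ hamWt f := by
  set T : Option F → Finset (Fin 2 → F) := fun o =>
    image (fun t : F => x + t • lineDir o) {t : F | f (x + t • lineDir o) ≠ 0}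
  have hcardT (o : Option F) : (T o).card = #{t : F | f (x + t • lineDir o) ≠ 0} :=
    card_image_of_injective _ fun t₁ t₂ h =>
      smul_left_injective F (lineDir_ne_zero o) (add_left_cancel h)
  have hdisj : ((univ : Finset (Option F)) : Set (Option F)).PairwiseDisjoint T := by
    intro o₁ _ o₂ _ hne
    refine disjoint_left.mpr fun y hy₁ hy₂ => hne ?_
    simp only [T, mem_image, mem_filter, mem_univ, true_and] at hy₁ hy₂
    obtain ⟨t₁, ht₁, rfl⟩ := hy₁
    obtain ⟨t₂, -, heq⟩ := hy₂
    have ht₁0 : t₁ ≠ 0 := by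
      rintro rfl
      simp [hx] at ht₁
    exact eq_of_smul_lineDir_eq ht₁0 (add_left_cancel heq).symm
  have hsupp : univ.biUnion T ⊆ ({y | f y ≠ 0} : Finset _) := by
    intro y hy
    simp only [T, mem_biUnion, mem_image, mem_filter, mem_univ, true_and] at hy ⊢
    obtain ⟨o, t, ht, rfl⟩ := hy
    exact ht
  calc (Fintype.card F + 1) * k = ∑ _o : Option F, k := by simp
    _ ≤ ∑ o, (T o).card := sum_le_sum fun o _ => (hcardT o).symm ▸ hk o
    _ = (univ.biUnion T).card := (card_biUnion hdisj).symm
    _ ≤ hamWt f := (card_le_card hsupp).trans_eq (hamWt_eq_card_filter f).symm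

end PlaneLines

theorem stmt16_general {F : Type*} [Field F] [Fintype F] (q : ℕ) (hq : Fintype.card F = q)
    (b : ℕ) (hb : 3 * b < q + 4)
    (f : (Fin 2 → F) → F)
    -- deg(f) = b : degree at most b but not at most b-1
    (hdeg : (∃ P : MvPolynomial (Fin 2) F, P.totalDegree ≤ b ∧
        ∀ x, MvPolynomial.eval x P = f x) ∧
      ¬ (∃ P : MvPolynomial (Fin 2) F, P.totalDegree ≤ b - 1 ∧
        ∀ x, MvPolynomial.eval x P = f x))
    (hw : hamWt f ≤ (q - b + 2) * (q - 2))
    (P : Fin 2 → F) (hP : f P = 0) :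
    -- there is an affine line through P avoiding the support of f
    ∃ dv : Fin 2 → F, dv ≠ 0 ∧ ∀ t : F, f (P + t • dv) = 0 := by
  classical
  by_contra! hmeets
  obtain ⟨⟨p, hpdeg, hpf⟩, -⟩ := hdeg
  obtain rfl : f = fun x => MvPolynomial.eval x p := funext fun x => (hpf x).symm
  have hline (o : Option F) : q - b ≤ #{t | MvPolynomial.eval (P + t • lineDir o) p ≠ 0} :=
    hq ▸ (Nat.sub_le_sub_left hpdeg _).trans
      (card_sub_totalDegree_le_card_filter_ne_zero p P _ (hmeets _ (lineDir_ne_zero o)))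
  have hcount := (card_succ_mul_le_hamWt _ P hP (q - b) hline).trans hw
  have hq2 : 2 ≤ q := hq ▸ Fintype.one_lt_card
  rw [hq] at hcount
  zify [(by omega : b ≤ q), hq2] at hcount
  -- `(q + 1)(q - b) - (q - b)(q - 2) = 3(q - b)`, which exceeds `2(q - 2)` since `3b < q + 4`
  nlinarith

theorem stmt16 {F : Type*} [Field F] [Fintype F] (q : ℕ) (hq : Fintype.card F = q)
    (hq7 : 7 ≤ q) (m : ℕ) (hm : 2 ≤ m) (b : ℕ) (hb6 : 6 ≤ b) (hb : 3 * b < q + 4)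
    (f : (Fin 2 → F) → F)
    -- deg(f) = b : degree at most b but not at most b-1
    (hdeg : (∃ P : MvPolynomial (Fin 2) F, P.totalDegree ≤ b ∧
        ∀ x, MvPolynomial.eval x P = f x) ∧
      ¬ (∃ P : MvPolynomial (Fin 2) F, P.totalDegree ≤ b - 1 ∧
        ∀ x, MvPolynomial.eval x P = f x))
    (hw : hamWt f ≤ (q - b + 2) * (q - 2))
    (P : Fin 2 → F) (hP : f P = 0) :
    -- there is an affine line through P avoiding the support of f
    ∃ dv : Fin 2 → F, dv ≠ 0 ∧ ∀ t : F, f (P + t • dv) = 0 :=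
  stmt16_general q hq b hb f hdeg hw P hP
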